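/- There is an absolute constant c > 0 such that the following holds. Let d+ > d− > 0 satisfy d+ − d− ≥ c√(d+ ln d+) with d+ bounded below by a sufficiently large absolute constant, let G be a locally finite graph with σ : V(G) → {±1}, let C be the core, and let v be a vertex such that G_v is a finite tree. Then for every t ≥ h_v: μ_v(t|G,σ) = μ_v(h_v+1|G,σ) = μ_v(t|G,σ_C), where μ(·|G,σ) denotes Warning Propagation initialized with U = V(G) and μ(·|G,σ_C) with U = C. -/

import Mathlib

open Filter Topology

attribute [local instance] Classical.propDecidable

set_option linter.unusedVariables false

noncomputable section


/-! ### Basic functions -/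

/-- The clamping function `ψ` restricted to the integers. -/
def psiZ (x : ℤ) : ℤ := max (-1) (min 1 x)

/-- The threshold function `ψ̃` restricted to the integers. -/
def tpsiZ (x : ℤ) : ℤ := if x ≤ -1 then -1 else 1

/-- `p : ℤ → ℝ` represents a probability measure on `{-1, 0, 1}`. -/
def IsProbOn3 (p : ℤ → ℝ) : Prop :=
  (∀ z, 0 ≤ p z) ∧ (∀ z : ℤ, z ∉ ({-1, 0, 1} : Set ℤ) → p z = 0) ∧ p (-1) + p 0 + p 1 = 1

/-- `p` is skewed: `p(1) ≥ 1 - d₊⁻¹⁰`. -/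
def Skewed (dp : ℝ) (p : ℤ → ℝ) : Prop := 1 - (dp ^ 10)⁻¹ ≤ p 1

/-- The point mass at `1`, i.e. `(0,0,1)`. -/
def delta1 : ℤ → ℝ := fun z => if z = 1 then 1 else 0

/-! ### The operator `T` -/

/-- Convolution of two mass functions on `ℤ`. -/
def convZ (a b : ℤ → ℝ) : ℤ → ℝ := fun z => ∑' w : ℤ, a w * b (z - w)

/-- `n`-fold convolution power (distribution of a sum of `n` i.i.d. copies). -/
def convPow (a : ℤ → ℝ) : ℕ → ℤ → ℝ
  | 0 => fun z => if z = 0 then 1 else 0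
  | n + 1 => convZ (convPow a n) a

/-- Poisson mass function with mean `d`. -/
def poisP (d : ℝ) (k : ℕ) : ℝ := Real.exp (-d) * d ^ k / (Nat.factorial k)

/-- Distribution of `-η` when `η` has distribution `a`. -/
def flipM (a : ℤ → ℝ) : ℤ → ℝ := fun z => a (-z)

/-- The distribution of `Z_p = ∑_{i=1}^{γ₊} η_i - ∑_{i=γ₊+1}^{γ₊+γ₋} η_i` where the `η_i`
are i.i.d. with distribution `p` and `γ₊ ~ Po(d₊)`, `γ₋ ~ Po(d₋)` are independent. -/
def Zdist (dp dm : ℝ) (p : ℤ → ℝ) : ℤ → ℝ := fun z =>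
  ∑' k : ℕ, ∑' l : ℕ, poisP dp k * poisP dm l * convZ (convPow p k) (convPow (flipM p) l) z

/-- The operator `𝒯 = 𝒯_{d₊,d₋}`: the distribution of `ψ(Z_p)`. -/
def Twp (dp dm : ℝ) (p : ℤ → ℝ) : ℤ → ℝ := fun z =>
  if z = 1 then ∑' m : ℕ, Zdist dp dm p (1 + (m : ℤ))
  else if z = 0 then Zdist dp dm p 0
  else if z = -1 then ∑' m : ℕ, Zdist dp dm p (-1 - (m : ℤ))
  else 0

/-- The value `Z` as a function of the outcomes `η : Fin (k+l) → ℤ`, where the first `k`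
coordinates form the `γ₊`-group and the remaining `l` the `γ₋`-group. -/
def zsum (k l : ℕ) (η : Fin (k + l) → ℤ) : ℤ :=
  (∑ j ∈ Finset.univ.filter (fun j : Fin (k + l) => (j : ℕ) < k), η j)
    - ∑ j ∈ Finset.univ.filter (fun j : Fin (k + l) => k ≤ (j : ℕ)), η j

/-- Conditional expectation of
`∑_{i=1}^{γ₊} 1{η_i = -ψ̃(Z)} + ∑_{i=γ₊+1}^{γ₊+γ₋} 1{η_i = ψ̃(Z)}` given `γ₊ = k, γ₋ = l`. -/
def innerPhi (p : ℤ → ℝ) (k l : ℕ) : ℝ :=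
  ∑ η ∈ Fintype.piFinset (fun _ : Fin (k + l) => ({-1, 0, 1} : Finset ℤ)),
    (∏ i, p (η i)) *
      (((Finset.univ.filter (fun i : Fin (k + l) =>
            (i : ℕ) < k ∧ η i = - tpsiZ (zsum k l η))).card : ℝ)
        + ((Finset.univ.filter (fun i : Fin (k + l) =>
            k ≤ (i : ℕ) ∧ η i = tpsiZ (zsum k l η))).card : ℝ))

/-- The functional `φ_{d₊,d₋}`. -/
def phiOp (dp dm : ℝ) (p : ℤ → ℝ) : ℝ :=
  (1 / 2) * ∑' k : ℕ, ∑' l : ℕ, poisP dp k * poisP dm l * innerPhi p k l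

/-! ### The L¹-Wasserstein distance on measures on `{-1,0,1}` -/

/-- `ℓ₁(p,q)`: infimum of `E |X - Y|` over couplings of `p` and `q`. -/
def ell1 (p q : ℤ → ℝ) : ℝ :=
  sInf { r | ∃ ν : ℤ × ℤ → ℝ, (∀ x y, 0 ≤ ν (x, y)) ∧
    (∀ x, ∑ y ∈ ({-1, 0, 1} : Finset ℤ), ν (x, y) = p x) ∧
    (∀ y, ∑ x ∈ ({-1, 0, 1} : Finset ℤ), ν (x, y) = q y) ∧
    r = ∑ x ∈ ({-1, 0, 1} : Finset ℤ), ∑ y ∈ ({-1, 0, 1} : Finset ℤ),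
          |(x : ℝ) - (y : ℝ)| * ν (x, y) }





/-! ### Graphs: restriction, cuts, the core, Warning Propagation -/

/-- Every neighbourhood in a graph on a finite vertex type is finite. -/
noncomputable instance fintypeNeighborSet {V : Type*} [Fintype V] (G : SimpleGraph V) (v : V) :
    Fintype (G.neighborSet v) := Fintype.ofFinite _

/-- The subgraph of `G` consisting of the edges inside `S` (the induced subgraph on `S`,
viewed as a graph on the ambient vertex set; vertices outside `S` are isolated). -/
def restrictG {V : Type*} (G : SimpleGraph V) (S : Set V) : SimpleGraph V where
  Adj x y := G.Adj x y ∧ x ∈ S ∧ y ∈ S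
  symm := ⟨fun x y h => ⟨G.adj_symm h.1, h.2.2, h.2.1⟩⟩
  loopless := ⟨fun x h => G.irrefl h.1⟩

/-- `cut(G, σ)` for the boundary condition `σ` on `U`: the least number of edges of `G` joining
vertices of different colours, over all `±1`-colourings `τ` agreeing with `σ` on `U`.
(The set of ordered pairs of adjacent bichromatic vertices has twice the size of the
corresponding edge set.) -/
def cutW {V : Type*} (G : SimpleGraph V) (U : Set V) (σ : V → ℤ) : ℕ :=
  sInf { k | ∃ τ : V → ℤ, (∀ x, τ x = 1 ∨ τ x = -1) ∧ (∀ x ∈ U, τ x = σ x) ∧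
    2 * k = {p : V × V | G.Adj p.1 p.2 ∧ τ p.1 ≠ τ p.2}.ncard }

/-- The defining property of the core. -/
def CoreProp {V : Type*} (G : SimpleGraph V) (σ : V → ℤ) (dp dm c : ℝ) (U : Set V) : Prop :=
  ∀ u ∈ U,
    |(({w | G.Adj u w ∧ σ u * σ w = 1}.ncard : ℝ) - dp)| ≤ c / 4 * Real.sqrt (dp * Real.log dp) ∧
    |(({w | G.Adj u w ∧ σ u * σ w = -1}.ncard : ℝ) - dm)| ≤ c / 4 * Real.sqrt (dp * Real.log dp) ∧
    ({w | G.Adj u w} \ U).ncard ≤ 100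

/-- The core: the largest subset satisfying `CoreProp`, i.e. the union of all such subsets. -/
def coreSet {V : Type*} (G : SimpleGraph V) (σ : V → ℤ) (dp dm c : ℝ) : Set V :=
  ⋃₀ { U | CoreProp G σ dp dm c U }

/-- The sets `C_v^{(t)}`. -/
def CvStage {V : Type*} (G : SimpleGraph V) (K : Set V) (v : V) : ℕ → Set V
  | 0 => {v} ∪ {w | G.Adj v w}
  | t + 1 => CvStage G K v t ∪ ⋃ u ∈ (CvStage G K v t \ K), {w | G.Adj u w}

/-- The set `C_v = ⋃_t C_v^{(t)}`. -/
def CvSet {V : Type*} (G : SimpleGraph V) (K : Set V) (v : V) : Set V :=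
  ⋃ t, CvStage G K v t

/-- Warning Propagation messages `μ_{v→w}(t | G, σ)` with initial condition `σ` on `U`. -/
def wpMsg {V : Type*} (G : SimpleGraph V) [∀ v : V, Fintype (G.neighborSet v)]
    (U : Set V) (σ : V → ℤ) : ℕ → V → V → ℤ
  | 0, v, _ => if v ∈ U then σ v else 0
  | t + 1, v, w => psiZ (∑ u ∈ (G.neighborFinset v).erase w, wpMsg G U σ t u v)

/-- `μ_v(t|G,σ) = ∑_{w ∈ ∂v} μ_{w→v}(t|G,σ)`. -/
def wpVal {V : Type*} (G : SimpleGraph V) [∀ v : V, Fintype (G.neighborSet v)]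
    (U : Set V) (σ : V → ℤ) (t : ℕ) (v : V) : ℤ :=
  ∑ w ∈ G.neighborFinset v, wpMsg G U σ t w v

/-- The maximum distance from `w` to any vertex reachable from `w` in `G`. -/
def hgt {V : Type*} (G : SimpleGraph V) (w : V) : ℕ :=
  sSup ((G.dist w) '' { u | G.Reachable w u })

/-- `G_v`: the subgraph of `G` induced on `C_v` (ambient form). -/
def GvG {V : Type*} (G : SimpleGraph V) (K : Set V) (v : V) : SimpleGraph V :=
  restrictG G (CvSet G K v)

/-- `w_{↑v}`: the neighbour of `w` on the path from `w` to `v` in `G_v`. -/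
def parentOf {V : Type*} (G : SimpleGraph V) (K : Set V) (v w : V) : V :=
  @Classical.epsilon V ⟨v⟩ fun x =>
    (GvG G K v).Adj w x ∧ (GvG G K v).dist x v + 1 = (GvG G K v).dist w v

/-- `G_v` with the edge `{w, w_{↑v}}` removed. -/
def GdelG {V : Type*} (G : SimpleGraph V) (K : Set V) (v w : V) : SimpleGraph V :=
  (GvG G K v).deleteEdges {s(w, parentOf G K v w)}

/-- `h_{w→v}`: the maximum distance between `w` and any other vertex of `G_{w→v}`. -/
def hdir {V : Type*} (G : SimpleGraph V) (K : Set V) (v w : V) : ℕ :=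
  hgt (GdelG G K v w) w

/-- `C_{w→v}`: the vertex set of the component of `w` in `G_v` minus the edge `{w, w_{↑v}}`. -/
def Cdir {V : Type*} (G : SimpleGraph V) (K : Set V) (v w : V) : Set V :=
  { u | (GdelG G K v w).Reachable w u }

/-- `G_{w→v}`: the component of `w` in `G_v` minus the edge `{w, w_{↑v}}`. -/
def Gdir {V : Type*} (G : SimpleGraph V) (K : Set V) (v w : V) : SimpleGraph V :=
  restrictG (GdelG G K v w) (Cdir G K v w)

/-- `h_v`: the maximum distance between `v` and any other vertex of `G_v`. -/
def hvG {V : Type*} (G : SimpleGraph V) (K : Set V) (v : V) : ℕ :=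
  hgt (GvG G K v) v

/-- `μ*_{w→v} = μ_{w→w_{↑v}}(h_{w→v}+1 | G, σ)`. -/
def muStarDir {V : Type*} (G : SimpleGraph V) [∀ v : V, Fintype (G.neighborSet v)]
    (K : Set V) (σ : V → ℤ) (v w : V) : ℤ :=
  wpMsg G Set.univ σ (hdir G K v w + 1) w (parentOf G K v w)

/-- `μ*_v = μ_v(h_v+1 | G, σ)`. -/
def muStarV {V : Type*} (G : SimpleGraph V) [∀ v : V, Fintype (G.neighborSet v)]
    (K : Set V) (σ : V → ℤ) (v : V) : ℤ :=
  wpVal G Set.univ σ (hvG G K v + 1) v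

/-- The ball of radius `t` around `v` in `G`. -/
def ballSet {V : Type*} (G : SimpleGraph V) (v : V) (t : ℕ) : Set V :=
  { u | G.Reachable v u ∧ G.dist v u ≤ t }

lemma mem_ballSet_self {V : Type*} (G : SimpleGraph V) (v : V) (t : ℕ) : v ∈ ballSet G v t :=
  ⟨SimpleGraph.Reachable.refl v, by simp [SimpleGraph.dist_self]⟩

/-- `∂^t(G,r,σ) ≅ ∂^t(H,r',τ)`: a root- and label-preserving isomorphism between the
balls of radius `t`. -/
def RootedBallIso {V W : Type*} (G : SimpleGraph V) (σ : V → ℤ) (r : V)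
    (H : SimpleGraph W) (τ : W → ℤ) (r' : W) (t : ℕ) : Prop :=
  ∃ φ : (G.induce (ballSet G r t)) ≃g (H.induce (ballSet H r' t)),
    φ ⟨r, mem_ballSet_self G r t⟩ = ⟨r', mem_ballSet_self H r' t⟩ ∧
    ∀ x, τ (φ x).1 = σ x.1





/-! ### The planted bisection model -/

/-- `σ` is a balanced bipartition: the two class sizes differ by at most one. -/
def BalancedPart {n : ℕ} (σ : Fin n → Bool) : Prop :=
  (((Finset.univ.filter (fun v => σ v = true)).card : ℤ)
    - ((Finset.univ.filter (fun v => σ v = false)).card : ℤ)).natAbs ≤ 1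

/-- The number of balanced bipartitions of `Fin n`. -/
def Nbal (n : ℕ) : ℕ := (Finset.univ.filter (fun σ : Fin n → Bool => BalancedPart σ)).card

/-- The probability `p_{σ(v)σ(w)}` of the edge `{v,w}`, where `p₊ = 2d₊/n`, `p₋ = 2d₋/n`. -/
def pairProb (dp dm : ℝ) (n : ℕ) (σ : Fin n → Bool) (v w : Fin n) : ℝ :=
  if σ v = σ w then 2 * dp / n else 2 * dm / n

/-- The probability mass of an outcome `ω = (σ, g)` of the planted bisection model
`G(n, 2d₊/n, 2d₋/n)`: `σ` is a uniformly random balanced bipartition and, independently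
for each pair `v ≠ w`, the edge `{v,w}` is present with probability `p_{σ(v)σ(w)}`. -/
def pbMass (dp dm : ℝ) (n : ℕ) (ω : (Fin n → Bool) × (Fin n → Fin n → Bool)) : ℝ :=
  (if BalancedPart ω.1 ∧ (∀ v w, ω.2 v w = ω.2 w v) ∧ (∀ v, ω.2 v v = false)
    then ((Nbal n : ℝ))⁻¹ else 0) *
  ∏ p ∈ Finset.univ.filter (fun p : Fin n × Fin n => p.1 < p.2),
    (if ω.2 p.1 p.2 = true then pairProb dp dm n ω.1 p.1 p.2
      else 1 - pairProb dp dm n ω.1 p.1 p.2)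

/-- The probability of an event in the planted bisection model. -/
def pbPr (dp dm : ℝ) (n : ℕ) (A : (Fin n → Bool) × (Fin n → Fin n → Bool) → Prop) : ℝ :=
  ∑ ω ∈ Finset.univ.filter A, pbMass dp dm n ω

/-- Sign of a Boolean, as `±1`. -/
def sgnB (b : Bool) : ℤ := if b then 1 else -1

/-- The planted assignment `σ : [n] → {±1}` of an outcome. -/
def pbSigma {n : ℕ} (ω : (Fin n → Bool) × (Fin n → Fin n → Bool)) : Fin n → ℤ :=
  fun v => sgnB (ω.1 v)

/-- The graph of an outcome. -/
def pbGraph (n : ℕ) (g : Fin n → Fin n → Bool) : SimpleGraph (Fin n) :=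
  SimpleGraph.fromRel fun v w => g v w = true

/-- The minimum bisection width `bis(G)`: the least number of edges joining `S` and its
complement over all `S` with `||S| - |S̄|| ≤ 1`. -/
def bisWidth {n : ℕ} (G : SimpleGraph (Fin n)) : ℕ :=
  sInf { k | ∃ S : Finset (Fin n),
    ((S.card : ℤ) - ((n : ℤ) - (S.card : ℤ))).natAbs ≤ 1 ∧
    k = {p : Fin n × Fin n | G.Adj p.1 p.2 ∧ p.1 ∈ S ∧ p.2 ∉ S}.ncard }

/-! ### Finite rooted typed trees and the two-type Galton–Watson tree -/

/-- Finite rooted trees whose vertices carry a type in `ℤ` (used with types `±1`). -/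
inductive GWT : Type
  | node : ℤ → List GWT → GWT

instance : Inhabited GWT := ⟨.node 0 []⟩

/-- The type of the root. -/
def GWT.typeOf : GWT → ℤ
  | .node s _ => s

/-- The subtrees pending on the children of the root. -/
def GWT.childrenOf : GWT → List GWT
  | .node _ l => l

/-- Valid positions (vertices) of a tree, encoded as lists of child indices. -/
def GWT.valid : GWT → List ℕ → Prop
  | _, [] => True
  | T, i :: p => i < T.childrenOf.length ∧ GWT.valid (T.childrenOf.getD i default) p

/-- The type of the vertex at position `q`. -/
def GWT.typeAt : GWT → List ℕ → ℤ
  | T, [] => T.typeOf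
  | T, i :: p => GWT.typeAt (T.childrenOf.getD i default) p

/-- The tree as a simple graph on its set of positions. -/
def GWT.graph (T : GWT) : SimpleGraph { p : List ℕ // T.valid p } where
  Adj a b := (∃ i : ℕ, (b : List ℕ) = (a : List ℕ) ++ [i]) ∨
             (∃ i : ℕ, (a : List ℕ) = (b : List ℕ) ++ [i])
  symm := ⟨fun a b h => h.symm⟩
  loopless := ⟨fun a h => by
    rcases h with ⟨i, hi⟩ | ⟨i, hi⟩ <;>
      · have := congrArg List.length hi
        simp at this⟩

/-- The root of the tree. -/
def GWT.root (T : GWT) : { p : List ℕ // T.valid p } := ⟨[], trivial⟩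

/-- The type labelling of the vertices. -/
def GWT.lab (T : GWT) : { p : List ℕ // T.valid p } → ℤ := fun q => T.typeAt q.1

/-- The Warning Propagation message `μ_{r↑}(t)` sent by the root of a tree towards its
(imaginary) parent, when the messages are initialised with the types. -/
def GWT.rootMsg : ℕ → GWT → ℤ
  | 0, T => T.typeOf
  | t + 1, T => psiZ ((T.childrenOf.map (GWT.rootMsg t)).sum)

/-- The probability mass function of the depth-`t` truncation of the two-type Galton–Watson
tree with root type `s`, realised as a random *ordered* tree: the root spawns `Po(d₊ + d₋)`
children, each independently of type `s` with probability `d₊/(d₊+d₋)` and of type `-s`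
with probability `d₋/(d₊+d₋)`, and the subtrees pending on the children are independent
Galton–Watson trees truncated at depth `t-1`. -/
def ogwMass (dp dm : ℝ) : ℕ → ℤ → GWT → ℝ
  | 0, s, T => if T.typeOf = s ∧ T.childrenOf = [] then 1 else 0
  | t + 1, s, T =>
    if T.typeOf = s then
      Real.exp (-(dp + dm)) / (Nat.factorial T.childrenOf.length) *
        (T.childrenOf.map fun U => (if U.typeOf = s then dp else dm)
          * ogwMass dp dm t U.typeOf U).prod
    else 0


end

/-!
With `c = 1` and `d₊` large, the gap `d₊ - d₋ ≥ √(d₊ ln d₊)` gives every core vertex at least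
two more core neighbours of its own sign than other neighbours. Hence, by induction on time,
every message sent by a core vertex equals its sign at all times, whether the messages start
from `σ` or from `σ_C`. A vertex of `G_v` outside the core has all its neighbours in `G_v`,
which is a finite tree, so the message it sends towards `v` is determined by the messages of
its children. By induction on the time, the message from a vertex at distance `k` from `v`
is therefore fixed from time `h_v + 1 - k` on, and is the same for both initialisations.
-/

open SimpleGraph Finset

lemma abs_psiZ_le_one (x : ℤ) : |psiZ x| ≤ 1 := by
  rw [abs_le]
  unfold psiZ
  omega

lemma psiZ_eq_of_one_le_mul {s x : ℤ} (hs : s = 1 ∨ s = -1) (h : 1 ≤ s * x) : psiZ x = s := by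
  rcases hs with rfl | rfl <;> simp only [psiZ] at * <;> omega

lemma Finset.card_filter_sub_card_filter_not_le_sum {α : Type*} (s : Finset α) (p : α → Prop)
    [DecidablePred p] {f : α → ℤ} (hp : ∀ x ∈ s, p x → f x = 1) (hf : ∀ x ∈ s, -1 ≤ f x) :
    (#(s.filter p) : ℤ) - #(s.filter fun x => ¬p x) ≤ ∑ x ∈ s, f x := by
  rw [← sum_filter_add_sum_filter_not s p]
  have hgood : ∑ x ∈ s.filter p, f x = #(s.filter p) := by
    rw [sum_congr rfl fun x hx => hp x (mem_filter.1 hx).1 (mem_filter.1 hx).2]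
    simp
  have hbad : -(#(s.filter fun x => ¬p x) : ℤ) ≤ ∑ x ∈ s.filter (fun x => ¬p x), f x := by
    simpa using card_nsmul_le_sum _ f (-1) fun x hx => hf x (mem_filter.1 hx).1
  linarith

section WarningPropagation

variable {V : Type*} (G : SimpleGraph V) [∀ v : V, Fintype (G.neighborSet v)] (σ : V → ℤ)

lemma wpMsg_succ (U : Set V) (t : ℕ) (v w : V) :
    wpMsg G U σ (t + 1) v w = psiZ (∑ u ∈ (G.neighborFinset v).erase w, wpMsg G U σ t u v) :=
  rfl

lemma abs_wpMsg_le_one (hσ : ∀ x, σ x = 1 ∨ σ x = -1) (U : Set V) (t : ℕ) (u w : V) :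
    |wpMsg G U σ t u w| ≤ 1 := by
  cases t with
  | zero =>
    simp only [wpMsg]
    split_ifs
    · rcases hσ u with h | h <;> simp [h]
    · simp
  | succ t => exact abs_psiZ_le_one _

-- The `2` leaves a strict majority after discarding the recipient of a message.
def IsSelfReinforcing (C : Set V) : Prop :=
  ∀ u ∈ C, #{x ∈ G.neighborFinset u | ¬(x ∈ C ∧ σ x = σ u)} + 2 ≤
    #{x ∈ G.neighborFinset u | x ∈ C ∧ σ x = σ u}

variable {G σ}

theorem IsSelfReinforcing.wpMsg_eq {C U : Set V} (hσ : ∀ x, σ x = 1 ∨ σ x = -1)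
    (hC : IsSelfReinforcing G σ C) (hCU : C ⊆ U) :
    ∀ (t : ℕ), ∀ u ∈ C, ∀ w, wpMsg G U σ t u w = σ u := by
  intro t
  induction t with
  | zero => intro u hu w; simp [wpMsg, hCU hu]
  | succ t ih =>
    intro u hu w
    rw [wpMsg_succ]
    refine psiZ_eq_of_one_le_mul (hσ u) ?_
    rw [mul_sum]
    set N := G.neighborFinset u
    set p : V → Prop := fun x => x ∈ C ∧ σ x = σ u
    have hsum : (#((N.erase w).filter p) : ℤ) - #((N.erase w).filter fun x => ¬p x) ≤
        ∑ x ∈ N.erase w, σ u * wpMsg G U σ t x u := by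
      refine card_filter_sub_card_filter_not_le_sum _ p (fun x _ hx => ?_) fun x _ => ?_
      · rw [ih x hx.1 u, hx.2]
        rcases hσ u with h | h <;> simp [h]
      · have := abs_le.1 (abs_wpMsg_le_one G σ hσ U t x u)
        rcases hσ u with h | h <;> simp only [h] <;> omega
    have hgood : #(N.filter p) ≤ #((N.erase w).filter p) + 1 := by
      rw [filter_erase]
      have := pred_card_le_card_erase (s := N.filter p) (a := w)
      omega
    have hbad : #((N.erase w).filter fun x => ¬p x) ≤ #(N.filter fun x => ¬p x) := by
      rw [filter_erase]
      exact card_erase_le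
    have hmaj : #(N.filter fun x => ¬p x) + 2 ≤ #(N.filter p) := hC u hu
    omega

end WarningPropagation

section Core

variable {V : Type*} {G : SimpleGraph V} [∀ v : V, Fintype (G.neighborSet v)] {σ : V → ℤ}
  {dp dm c : ℝ}

lemma coreProp_coreSet : CoreProp G σ dp dm c (coreSet G σ dp dm c) := by
  rintro u ⟨U, hU, huU⟩
  obtain ⟨hplus, hminus, hout⟩ := hU u huU
  refine ⟨hplus, hminus, le_trans (Set.ncard_le_ncard ?_ ?_) hout⟩
  · exact Set.sdiff_subset_sdiff_right (Set.subset_sUnion_of_mem hU)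
  · exact (G.neighborSet u).toFinite.sdiff

theorem CoreProp.isSelfReinforcing {C : Set V} (hσ : ∀ x, σ x = 1 ∨ σ x = -1)
    (hC : CoreProp G σ dp dm c C) (hgap : 202 + c / 2 * √(dp * Real.log dp) ≤ dp - dm) :
    IsSelfReinforcing G σ C := by
  intro u hu
  obtain ⟨hplus, hminus, hout⟩ := hC u hu
  set N := G.neighborFinset u
  set A := N.filter fun x => σ x = σ u
  set B := N.filter fun x => σ x ≠ σ u
  set O := N.filter fun x => x ∉ C
  have hA : {w | G.Adj u w ∧ σ u * σ w = 1} = (A : Set V) := by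
    ext x
    rcases hσ u with h | h <;> rcases hσ x with h' | h' <;> simp [A, N, h, h']
  have hB : {w | G.Adj u w ∧ σ u * σ w = -1} = (B : Set V) := by
    ext x
    rcases hσ u with h | h <;> rcases hσ x with h' | h' <;> simp [B, N, h, h']
  have hO : {w | G.Adj u w} \ C = (O : Set V) := by
    ext x
    simp [O, N]
  rw [hA, Set.ncard_coe_finset] at hplus
  rw [hB, Set.ncard_coe_finset] at hminus
  rw [hO, Set.ncard_coe_finset] at hout
  have hAB : #B + 202 ≤ #A := by
    have := abs_le.1 hplus
    have := abs_le.1 hminus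
    exact_mod_cast (by linarith : (#B : ℝ) + 202 ≤ #A)
  have hgood : #A ≤ #{x ∈ N | x ∈ C ∧ σ x = σ u} + #O := by
    refine (card_le_card fun x hx => ?_).trans (card_union_le _ _)
    simp only [A, O, mem_filter, mem_union] at hx ⊢
    tauto
  have hbad : #{x ∈ N | ¬(x ∈ C ∧ σ x = σ u)} ≤ #B + #O := by
    refine (card_le_card fun x hx => ?_).trans (card_union_le _ _)
    simp only [B, O, mem_filter, mem_union] at hx ⊢
    tauto
  omega

end Core

lemma four_hundred_four_le_sqrt_mul_log {x : ℝ} (hx : 10 ^ 6 ≤ x) : 404 ≤ √(x * Real.log x) := by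
  have hlog : 1 ≤ Real.log x := by
    rw [Real.le_log_iff_exp_le (by linarith)]
    linarith [Real.exp_one_lt_d9]
  rw [Real.le_sqrt (by norm_num) (by nlinarith)]
  nlinarith

namespace SimpleGraph.IsAcyclic

variable {V : Type*} {H : SimpleGraph V} {v w : V}

lemma eq_penultimate_of_dist_add_one (hH : H.IsAcyclic) {p : H.Walk v w} (hp : p.IsPath)
    {y : V} (hwy : H.Adj w y) (hy : H.dist v y + 1 = H.dist v w) : y = p.penultimate := by
  classical
  obtain ⟨q, hq, hql⟩ := (p.reachable.trans hwy.reachable).exists_path_of_dist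
  have hwq : w ∉ q.support := fun hw => by
    have := (dist_le (q.takeUntil w hw)).trans (q.length_takeUntil_le_length hw)
    omega
  exact hH.eq_penultimate_of_adj_end hp hwy
    (hH.mem_support_of_ne_mem_support_of_adj_of_isPath hp hq hwy hwq)

lemma dist_eq_add_one_of_adj_of_ne (hH : H.IsAcyclic) (hreach : H.Reachable v w) {u x : V}
    (hwu : H.Adj w u) (hu : H.dist v u + 1 = H.dist v w) (hwx : H.Adj w x) (hxu : x ≠ u) :
    H.dist v x = H.dist v w + 1 := by
  refine (hH.dist_eq_dist_add_one_of_adj_of_reachable v hwx hreach).resolve_left fun hx => hxu ?_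
  obtain ⟨p, hp, -⟩ := hreach.exists_path_of_dist
  rw [hH.eq_penultimate_of_dist_add_one hp hwx hx.symm,
    hH.eq_penultimate_of_dist_add_one hp hwu hu]

end SimpleGraph.IsAcyclic

section RestrictG

variable {V : Type*} (G : SimpleGraph V) (S : Set V)

def induceHomRestrictG : G.induce S →g restrictG G S where
  toFun := Subtype.val
  map_rel' h := ⟨h, Subtype.prop _, Subtype.prop _⟩

variable {G S}

lemma mem_of_restrictG_walk {a b : V} (p : (restrictG G S).Walk a b) (ha : a ∈ S) : b ∈ S := by
  induction p with
  | nil => exact ha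
  | cons h _ ih => exact ih h.2.2

lemma exists_induce_walk_map_eq {a b : V} (p : (restrictG G S).Walk a b) (ha : a ∈ S)
    (hb : b ∈ S) :
    ∃ q : (G.induce S).Walk ⟨a, ha⟩ ⟨b, hb⟩, q.map (induceHomRestrictG G S) = p := by
  induction p with
  | nil => exact ⟨Walk.nil, rfl⟩
  | cons h p ih =>
    obtain ⟨q, rfl⟩ := ih h.2.2 hb
    exact ⟨Walk.cons (show (G.induce S).Adj ⟨_, ha⟩ ⟨_, h.2.2⟩ from h.1) q, rfl⟩

lemma isAcyclic_restrictG (h : (G.induce S).IsAcyclic) : (restrictG G S).IsAcyclic := by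
  intro a c hc
  have ha : a ∈ S := by
    cases c with
    | nil => exact absurd hc Walk.not_isCycle_nil
    | cons h _ => exact h.2.1
  obtain ⟨q, rfl⟩ := exists_induce_walk_map_eq c ha ha
  exact h q ((Walk.isCycle_map_iff_of_injective Subtype.val_injective).1 hc)

lemma reachable_restrictG (h : (G.induce S).Preconnected) {a b : V} (ha : a ∈ S) (hb : b ∈ S) :
    (restrictG G S).Reachable a b :=
  (h ⟨a, ha⟩ ⟨b, hb⟩).map (induceHomRestrictG G S)

end RestrictG

section Cv

variable {V : Type*} {G : SimpleGraph V} {K : Set V} {v : V}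

lemma mem_CvSet_self : v ∈ CvSet G K v :=
  Set.mem_iUnion.2 ⟨0, Or.inl rfl⟩

lemma mem_CvSet_of_adj {w : V} (h : G.Adj v w) : w ∈ CvSet G K v :=
  Set.mem_iUnion.2 ⟨0, Or.inr h⟩

lemma mem_CvSet_of_adj_of_notMem {u x : V} (hu : u ∈ CvSet G K v) (huK : u ∉ K)
    (hx : G.Adj u x) : x ∈ CvSet G K v := by
  obtain ⟨s, hs⟩ := Set.mem_iUnion.1 hu
  exact Set.mem_iUnion.2 ⟨s + 1, Or.inr (Set.mem_biUnion ⟨hs, huK⟩ hx)⟩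

lemma dist_GvG_le_hvG (hfin : (CvSet G K v).Finite) (hT : (G.induce (CvSet G K v)).IsTree)
    {w : V} (hw : w ∈ CvSet G K v) : (GvG G K v).dist v w ≤ hvG G K v := by
  have hreach : {u | (GvG G K v).Reachable v u} ⊆ CvSet G K v :=
    fun u hu => hu.elim fun p => mem_of_restrictG_walk p mem_CvSet_self
  exact le_csSup ((hfin.subset hreach).image _).bddAbove
    ⟨w, reachable_restrictG hT.connected.preconnected mem_CvSet_self hw, rfl⟩

end Cv

theorem wpMsg_eq_of_hvG_le {V : Type*} {G : SimpleGraph V} [∀ v : V, Fintype (G.neighborSet v)]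
    {σ : V → ℤ} {K U U' : Set V} {v : V} (hfin : (CvSet G K v).Finite)
    (hT : (G.induce (CvSet G K v)).IsTree) (hU : ∀ t, ∀ u ∈ K, ∀ w, wpMsg G U σ t u w = σ u)
    (hU' : ∀ t, ∀ u ∈ K, ∀ w, wpMsg G U' σ t u w = σ u) (s : ℕ) {w u : V}
    (hwu : (GvG G K v).Adj w u) (hu : (GvG G K v).dist v u + 1 = (GvG G K v).dist v w) {t : ℕ}
    (hs : hvG G K v + 1 ≤ (GvG G K v).dist v w + s)
    (ht : hvG G K v + 1 ≤ (GvG G K v).dist v w + t) :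
    wpMsg G U σ s w u = wpMsg G U' σ t w u := by
  induction s generalizing w u t with
  | zero => have := dist_GvG_le_hvG hfin hT hwu.2.1; omega
  | succ s ih =>
    by_cases hwK : w ∈ K
    · rw [hU _ w hwK, hU' _ w hwK]
    have hw := dist_GvG_le_hvG hfin hT hwu.2.1
    obtain ⟨t, rfl⟩ : ∃ t', t = t' + 1 := ⟨t - 1, by omega⟩
    rw [wpMsg_succ, wpMsg_succ]
    refine congrArg psiZ (sum_congr rfl fun x hx => ?_)
    obtain ⟨hxu, hwx⟩ := mem_erase.1 hx
    rw [mem_neighborFinset] at hwx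
    have hwx' : (GvG G K v).Adj w x := ⟨hwx, hwu.2.1, mem_CvSet_of_adj_of_notMem hwu.2.1 hwK hwx⟩
    have hx : (GvG G K v).dist v x = (GvG G K v).dist v w + 1 :=
      (isAcyclic_restrictG hT.isAcyclic).dist_eq_add_one_of_adj_of_ne
        (reachable_restrictG hT.connected.preconnected mem_CvSet_self hwu.2.1) hwu hu hwx' hxu
    exact ih hwx'.symm hx.symm (by omega) (by omega)

/-- Lemma 3.2 (2): for all `t ≥ h_v`, `μ_v(t|G,σ) = μ_v(h_v+1|G,σ) = μ_v(t|G,σ_C)`. -/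
theorem root_value_stabilises :
    ∃ c : ℝ, 0 < c ∧ ∃ D : ℝ, ∀ dp dm : ℝ,
    0 < dm → dm < dp → D ≤ dp → c * Real.sqrt (dp * Real.log dp) ≤ dp - dm →
    ∀ (V : Type*) (G : SimpleGraph V) [∀ v : V, Fintype (G.neighborSet v)] (σ : V → ℤ),
    (∀ x : V, σ x = 1 ∨ σ x = -1) →
    ∀ K : Set V, K = coreSet G σ dp dm c →
    ∀ v : V, (CvSet G K v).Finite → (G.induce (CvSet G K v)).IsTree →
    ∀ t : ℕ, hvG G K v ≤ t →
      wpVal G Set.univ σ t v = muStarV G K σ v ∧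
      wpVal G K σ t v = muStarV G K σ v := by
  refine ⟨1, one_pos, 10 ^ 6, fun dp dm _ _ hD hgap V G _ σ hσ K hK v hfin hT t ht => ?_⟩
  have hcore : IsSelfReinforcing G σ K := hK ▸ coreProp_coreSet.isSelfReinforcing hσ (by
    linarith [four_hundred_four_le_sqrt_mul_log hD])
  have hnbr : ∀ U, K ⊆ U → ∀ w ∈ G.neighborFinset v,
      wpMsg G U σ t w v = wpMsg G Set.univ σ (hvG G K v + 1) w v := by
    intro U hKU w hw
    rw [mem_neighborFinset] at hw
    have hvw : (GvG G K v).Adj v w := ⟨hw, mem_CvSet_self, mem_CvSet_of_adj hw⟩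
    have hdist : (GvG G K v).dist v w = 1 := dist_eq_one_iff_adj.2 hvw
    exact wpMsg_eq_of_hvG_le hfin hT (hcore.wpMsg_eq hσ hKU) (hcore.wpMsg_eq hσ (Set.subset_univ K))
      t hvw.symm (by rw [dist_self, hdist]) (by omega) (by omega)
  exact ⟨sum_congr rfl (hnbr _ (Set.subset_univ K)), sum_congr rfl (hnbr K subset_rfl)⟩
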